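/- arXiv:2410.14227 — 2 statements merged into one kernel-verified Lean document; each statement's English description precedes it below -/
import Mathlib

section
/- Let (∧,∨) be the reference pair of a Morse sequence W on K, let κ be a critical face of W and let ν be any face of K. Then (1) κ ∈ ∧(ν) if and only if there exists a ∧-path in W from ν to κ, and (2) κ ∈ ∨(ν) if and only if there exists a ∨-path in W from κ to ν. -/
/-! ## Basic notions: simplicial complexes, collapses, expansions, fillings -/

variable {V : Type*} [DecidableEq V]

/-- A (finite) simplicial complex: a finite collection of nonempty finite sets that is
closed under taking nonempty subsets. -/
def IsComplex (K : Finset (Finset V)) : Prop :=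
  ∀ τ ∈ K, τ.Nonempty ∧ ∀ σ, σ ⊆ τ → σ.Nonempty → σ ∈ K

/-- `ν` is a facet (inclusion-maximal face) of `K`. -/
def IsFacet (K : Finset (Finset V)) (ν : Finset V) : Prop :=
  ν ∈ K ∧ ∀ ρ ∈ K, ν ⊆ ρ → ρ = ν

/-- `(σ, τ)` is a free pair for `K`: `σ ⊊ τ` and `τ` is the only face of `K`
strictly containing `σ`. -/
def IsFreePair (K : Finset (Finset V)) (σ τ : Finset V) : Prop :=
  σ ∈ K ∧ τ ∈ K ∧ σ ⊂ τ ∧ ∀ ρ ∈ K, σ ⊂ ρ → ρ = τ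

/-- `K` is an elementary expansion of `L` (equivalently, `L` is an elementary collapse
of `K`): `L = K \ {σ, τ}` for some free pair `(σ, τ)` of `K`. -/
def ElemExpansion (L K : Finset (Finset V)) : Prop :=
  ∃ σ τ, IsFreePair K σ τ ∧ L = K \ {σ, τ}

/-- `K` is an elementary filling of `L` (equivalently, `L` is an elementary perforation
of `K`): `L = K \ {ν}` for some facet `ν` of `K`. -/
def ElemFilling (L K : Finset (Finset V)) : Prop :=
  ∃ ν, IsFacet K ν ∧ L = K \ {ν}

/-- `L` is an elementary collapse of `K`. -/
def ElemCollapse (K L : Finset (Finset V)) : Prop :=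
  ∃ σ τ, IsFreePair K σ τ ∧ L = K \ {σ, τ}

/-- `K` collapses onto `L`: there is a sequence of elementary collapses from `K` to `L`. -/
def CollapsesOnto (K L : Finset (Finset V)) : Prop :=
  Relation.ReflTransGen ElemCollapse K L

/-! ## Morse sequences -/

/-- A Morse sequence `⟨∅ = K₀, …, K_k = K⟩`: each `K_i` is a simplicial complex that is
an elementary expansion or an elementary filling of `K_{i-1}`. -/
structure MorseSeq (V : Type*) [DecidableEq V] where
  k : ℕ
  seq : ℕ → Finset (Finset V)
  cpx : ∀ i ≤ k, IsComplex (seq i)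
  init : seq 0 = ∅
  step : ∀ i, 1 ≤ i → i ≤ k → ElemExpansion (seq (i - 1)) (seq i) ∨ ElemFilling (seq (i - 1)) (seq i)

/-- The simplicial complex `K = K_k` on which the Morse sequence lives. -/
def MorseSeq.cplx (W : MorseSeq V) : Finset (Finset V) := W.seq W.k

/-- A face added by a filling step: a critical face of `W`. -/
def MorseSeq.Critical (W : MorseSeq V) (ν : Finset V) : Prop :=
  ∃ i, 1 ≤ i ∧ i ≤ W.k ∧ W.seq i \ W.seq (i - 1) = {ν}

/-- `(σ, τ)` is a regular pair for `W`: the two faces are added together by an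
elementary expansion step. -/
def MorseSeq.Regular (W : MorseSeq V) (σ τ : Finset V) : Prop :=
  ∃ i, 1 ≤ i ∧ i ≤ W.k ∧ σ ⊂ τ ∧ W.seq i \ W.seq (i - 1) = {σ, τ}

/-- `σ` is lower regular for `W`. -/
def MorseSeq.LowerRegular (W : MorseSeq V) (σ : Finset V) : Prop := ∃ τ, W.Regular σ τ

/-- `τ` is upper regular for `W`. -/
def MorseSeq.UpperRegular (W : MorseSeq V) (τ : Finset V) : Prop := ∃ σ, W.Regular σ τ

/-! ## Chains modulo 2 -/

/-- The boundary `∂(σ)` of a simplex: the chain of its (nonempty) codimension-one faces. -/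
def bd (σ : Finset V) : Finset (Finset V) :=
  σ.powerset.filter fun ρ => ρ.Nonempty ∧ ρ.card + 1 = σ.card

/-- The coboundary `δ(σ)` of a simplex in `K`: the chain of faces of `K` of
codimension one over `σ` containing `σ`. -/
def cobd (K : Finset (Finset V)) (σ : Finset V) : Finset (Finset V) :=
  K.filter fun τ => σ ⊆ τ ∧ σ.card + 1 = τ.card

/-- Mod-2 linear extension: `chainSum c f` is the sum (symmetric difference) of
the chains `f σ` over `σ ∈ c`; an element belongs to it iff it belongs to an odd
number of the `f σ`. -/
def chainSum (c : Finset (Finset V)) (f : Finset V → Finset (Finset V)) : Finset (Finset V) :=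
  (c.biUnion f).filter fun ν => (c.filter fun σ => ν ∈ f σ).card % 2 = 1

/-- `c` is a `p`-chain of `K`: a set of `p`-simplices of `K`. -/
def IsChainOf (K : Finset (Finset V)) (p : ℕ) (c : Finset (Finset V)) : Prop :=
  ∀ ν ∈ c, ν ∈ K ∧ ν.card = p + 1

/-- `c` is a chain of critical `p`-simplices of `W` (an element of `Ŵ[p]`). -/
def IsCritChain (W : MorseSeq V) (p : ℕ) (c : Finset (Finset V)) : Prop :=
  ∀ ν ∈ c, W.Critical ν ∧ ν.card = p + 1

/-! ## Frames, reference and coreference maps -/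

/-- A frame on `W`: it assigns to each `p`-simplex of `K` a chain of critical
`p`-simplices of `W`. -/
def IsFrame (W : MorseSeq V) (Υ : Finset V → Finset (Finset V)) : Prop :=
  ∀ ν ∈ W.cplx, ∀ μ ∈ Υ ν, W.Critical μ ∧ μ.card = ν.card

/-- `Λ` is the reference map of `W`: a frame with `Λ(ν) = ν` for critical `ν`, and
`Λ(τ) = 0`, `Λ(∂τ) = 0` for upper regular `τ`. -/
def IsRefMap (W : MorseSeq V) (Λ : Finset V → Finset (Finset V)) : Prop :=
  IsFrame W Λ ∧ (∀ ν, W.Critical ν → Λ ν = {ν}) ∧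
    ∀ τ, W.UpperRegular τ → Λ τ = ∅ ∧ chainSum (bd τ) Λ = ∅

/-- `Λ` is the coreference map of `W`: a frame with `Λ(ν) = ν` for critical `ν`, and
`Λ(σ) = 0`, `Λ(δσ) = 0` for lower regular `σ`. -/
def IsCorefMap (W : MorseSeq V) (Λ : Finset V → Finset (Finset V)) : Prop :=
  IsFrame W Λ ∧ (∀ ν, W.Critical ν → Λ ν = {ν}) ∧
    ∀ σ, W.LowerRegular σ → Λ σ = ∅ ∧ chainSum (cobd W.cplx σ) Λ = ∅

/-- The extension map `∧̃` of `W` (defined from the coreference map `Vee`):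
`∧̃(κ) = {ν ∈ K | κ ∈ ∨(ν)}`. -/
def extMap (W : MorseSeq V) (Vee : Finset V → Finset (Finset V)) (κ : Finset V) :
    Finset (Finset V) :=
  W.cplx.filter fun ν => κ ∈ Vee ν

/-- The coextension map `∨̃` of `W` (defined from the reference map `Λ`):
`∨̃(κ) = {ν ∈ K | κ ∈ ∧(ν)}`. -/
def coextMap (W : MorseSeq V) (Λ : Finset V → Finset (Finset V)) (κ : Finset V) :
    Finset (Finset V) :=
  W.cplx.filter fun ν => κ ∈ Λ ν

/-! ## Gradient and cogradient paths -/

/-- `IsGradPathList W l` : the list `l = [σ₀, τ₀, σ₁, τ₁, …, σ_k]` is a gradient path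
in `W`. -/
inductive IsGradPathList (W : MorseSeq V) : List (Finset V) → Prop
  | single (σ : Finset V) : σ ∈ W.cplx → IsGradPathList W [σ]
  | cons (σ τ σ' : Finset V) (rest : List (Finset V)) :
      W.Regular σ τ → σ' ∈ bd τ → σ' ≠ σ → IsGradPathList W (σ' :: rest) →
      IsGradPathList W (σ :: τ :: σ' :: rest)

/-- `IsCogradPathList W l` : the list `l = [τ₀, σ₁, τ₁, …, σ_k, τ_k]` is a cogradient path
in `W`. -/
inductive IsCogradPathList (W : MorseSeq V) : List (Finset V) → Prop
  | single (τ : Finset V) : τ ∈ W.cplx → IsCogradPathList W [τ]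
  | cons (τ σ' τ' : Finset V) (rest : List (Finset V)) :
      W.Regular σ' τ' → τ ∈ cobd W.cplx σ' → τ' ≠ τ → IsCogradPathList W (τ' :: rest) →
      IsCogradPathList W (τ :: σ' :: τ' :: rest)

/-- The set of gradient paths in `W` from `ν` to `κ`. -/
def GradPaths (W : MorseSeq V) (ν κ : Finset V) : Set (List (Finset V)) :=
  {l | IsGradPathList W l ∧ l.head? = some ν ∧ l.getLast? = some κ}

/-- The set of cogradient paths in `W` from `κ` to `ν`. -/
def CogradPaths (W : MorseSeq V) (κ ν : Finset V) : Set (List (Finset V)) :=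
  {l | IsCogradPathList W l ∧ l.head? = some κ ∧ l.getLast? = some ν}

/-- A `∧`-path: a gradient path `⟨σ₀, τ₀, …, σ_k⟩` such that `σ_k ∈ Λ(σ_i)` for every
`i ∈ [0,k]` (the `σ_i` sit at the even positions of the list). -/
def IsRefPath (W : MorseSeq V) (Λ : Finset V → Finset (Finset V))
    (l : List (Finset V)) : Prop :=
  IsGradPathList W l ∧ ∀ κ ∈ l.getLast?, ∀ i, i % 2 = 0 → ∀ σ ∈ l[i]?, κ ∈ Λ σ

/-- A `∨`-path: a cogradient path `⟨τ₀, σ₁, τ₁, …, τ_k⟩` such that `τ₀ ∈ Vee(τ_i)` for every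
`i ∈ [0,k]` (the `τ_i` sit at the even positions of the list). -/
def IsCorefPath (W : MorseSeq V) (Vee : Finset V → Finset (Finset V))
    (l : List (Finset V)) : Prop :=
  IsCogradPathList W l ∧ ∀ κ ∈ l.head?, ∀ i, i % 2 = 0 → ∀ τ ∈ l[i]?, κ ∈ Vee τ

lemma seq_mono_step (W : MorseSeq V) {i : ℕ} (h1 : 1 ≤ i) (h2 : i ≤ W.k) :
    W.seq (i-1) ⊆ W.seq i := by
  rcases W.step i h1 h2 with ⟨σ, τ, _, h⟩ | ⟨μ, _, h⟩ <;>
    · rw [h]; exact Finset.sdiff_subset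
lemma seq_mono (W : MorseSeq V) {i j : ℕ} (hij : i ≤ j) (hj : j ≤ W.k) :
    W.seq i ⊆ W.seq j := by
  induction j with
  | zero => interval_cases i; rfl
  | succ n ih =>
    rcases Nat.lt_or_ge i (n+1) with h | h
    · have h1 : i ≤ n := by omega
      have := ih h1 (by omega)
      have h2 : W.seq n ⊆ W.seq (n+1) := by
        have := seq_mono_step W (i := n+1) (by omega) hj
        simpa using this
      exact this.trans h2
    · have : i = n + 1 := by omega
      subst this; rfl
lemma freePair_card {K : Finset (Finset V)} {σ τ : Finset V}
    (hK : IsComplex K) (h : IsFreePair K σ τ) : σ.card + 1 = τ.card := by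
  obtain ⟨hσ, hτ, hlt, huniq⟩ := h
  obtain ⟨a, haτ, haσ⟩ := Finset.exists_of_ssubset hlt
  have hρK : insert a σ ∈ K := by
    refine (hK τ hτ).2 _ ?_ ⟨a, Finset.mem_insert_self a σ⟩
    exact Finset.insert_subset haτ hlt.subset
  have : insert a σ = τ := huniq _ hρK (Finset.ssubset_insert haσ)
  rw [← this, Finset.card_insert_of_notMem haσ]
lemma exists_addIdx (W : MorseSeq V) {ν : Finset V} (hν : ν ∈ W.cplx) :
    ∃ i, 1 ≤ i ∧ i ≤ W.k ∧ ν ∈ W.seq i ∧ ∀ j < i, ν ∉ W.seq j := by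
  classical
  have hex : ∃ i, ν ∈ W.seq i := ⟨W.k, hν⟩
  set i := Nat.find hex with hi
  have hmem : ν ∈ W.seq i := Nat.find_spec hex
  have hmin : ∀ j < i, ν ∉ W.seq j := fun j hj => Nat.find_min hex hj
  have h1 : 1 ≤ i := by
    rcases Nat.eq_zero_or_pos i with h | h
    · exfalso; rw [h] at hmem; rw [W.init] at hmem; exact absurd hmem (Finset.notMem_empty ν)
    · exact h
  have h2 : i ≤ W.k := Nat.find_min' hex hν
  exact ⟨i, h1, h2, hmem, hmin⟩
lemma diff_eq {W : MorseSeq V} {i : ℕ} (h1 : 1 ≤ i) (h2 : i ≤ W.k)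
    {D : Finset (Finset V)} (hD : D ⊆ W.seq i) (hE : W.seq (i-1) = W.seq i \ D) :
    W.seq i \ W.seq (i-1) = D := by
  rw [hE]
  ext x
  simp only [Finset.mem_sdiff, not_and, not_not]
  constructor
  · rintro ⟨hx, h⟩; exact h hx
  · intro hx; exact ⟨hD hx, fun _ => hx⟩
lemma step_cases (W : MorseSeq V) {i : ℕ} {ν : Finset V} (h1 : 1 ≤ i) (h2 : i ≤ W.k)
    (hν : ν ∈ W.seq i) (hν' : ν ∉ W.seq (i-1)) :
    (W.Critical ν ∧ W.seq (i-1) = W.seq i \ {ν}) ∨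
    (∃ σ τ, W.Regular σ τ ∧ IsFreePair (W.seq i) σ τ ∧ W.seq (i-1) = W.seq i \ {σ, τ}
      ∧ (ν = σ ∨ ν = τ)) := by
  rcases W.step i h1 h2 with ⟨σ, τ, hfp, hE⟩ | ⟨μ, hfac, hE⟩
  · right
    have hsub : ({σ, τ} : Finset (Finset V)) ⊆ W.seq i := by
      intro x hx
      rcases Finset.mem_insert.mp hx with h | h
      · subst h; exact hfp.1
      · rw [Finset.mem_singleton] at h; subst h; exact hfp.2.1
    have hdiff := diff_eq h1 h2 hsub hE
    refine ⟨σ, τ, ⟨i, h1, h2, hfp.2.2.1, hdiff⟩, hfp, hE, ?_⟩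
    have : ν ∈ W.seq i \ W.seq (i-1) := Finset.mem_sdiff.mpr ⟨hν, hν'⟩
    rw [hdiff] at this
    simpa using this
  · left
    have hsub : ({μ} : Finset (Finset V)) ⊆ W.seq i := by
      simpa using hfac.1
    have hdiff := diff_eq h1 h2 hsub hE
    have : ν ∈ W.seq i \ W.seq (i-1) := Finset.mem_sdiff.mpr ⟨hν, hν'⟩
    rw [hdiff, Finset.mem_singleton] at this
    subst this
    exact ⟨⟨i, h1, h2, hdiff⟩, hE⟩
lemma Regular.mem_cplx {W : MorseSeq V} {σ τ : Finset V} (h : W.Regular σ τ) :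
    σ ∈ W.cplx ∧ τ ∈ W.cplx := by
  obtain ⟨i, h1, h2, hlt, hd⟩ := h
  have hσ : σ ∈ W.seq i \ W.seq (i-1) := by rw [hd]; simp
  have hτ : τ ∈ W.seq i \ W.seq (i-1) := by rw [hd]; simp
  exact ⟨seq_mono W h2 le_rfl (Finset.mem_sdiff.mp hσ).1,
         seq_mono W h2 le_rfl (Finset.mem_sdiff.mp hτ).1⟩
lemma chainSum_even {c : Finset (Finset V)} {f : Finset V → Finset (Finset V)}
    (h : chainSum c f = ∅) {κ σ : Finset V} (hσ : σ ∈ c) (hκ : κ ∈ f σ) :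
    ∃ σ' ∈ c, σ' ≠ σ ∧ κ ∈ f σ' := by
  classical
  have hb : κ ∈ c.biUnion f := Finset.mem_biUnion.mpr ⟨σ, hσ, hκ⟩
  have hnot : κ ∉ chainSum c f := by rw [h]; exact Finset.notMem_empty κ
  have heven : (c.filter fun σ => κ ∈ f σ).card % 2 = 0 := by
    rcases Nat.mod_two_eq_zero_or_one (c.filter fun σ => κ ∈ f σ).card with h0 | h1
    · exact h0
    · exact absurd (Finset.mem_filter.mpr ⟨hb, h1⟩) hnot
  by_contra hcon
  push_neg at hcon
  have : (c.filter fun σ' => κ ∈ f σ') = {σ} := by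
    apply Finset.eq_singleton_iff_unique_mem.mpr
    refine ⟨Finset.mem_filter.mpr ⟨hσ, hκ⟩, ?_⟩
    intro x hx
    rcases Finset.mem_filter.mp hx with ⟨hx1, hx2⟩
    by_contra hne
    exact (hcon x hx1 hne) hx2
  rw [this] at heven
  simp at heven
lemma cogradLen {W : MorseSeq V} {l : List (Finset V)} (h : IsCogradPathList W l) :
    l.length % 2 = 1 := by
  induction h with
  | single τ _ => rfl
  | cons τ σ' τ' rest _ _ _ _ ih => simp only [List.length_cons] at ih ⊢; omega
lemma cograd_append {W : MorseSeq V} {l : List (Finset V)} {τ'' σ' τ' : Finset V}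
    (h : IsCogradPathList W l) (hlast : l.getLast? = some τ'')
    (hreg : W.Regular σ' τ') (hc : τ'' ∈ cobd W.cplx σ') (hne : τ' ≠ τ'') :
    IsCogradPathList W (l ++ [σ', τ']) := by
  revert hlast
  induction h with
  | single a ha =>
    intro hlast
    have : a = τ'' := by simpa using hlast
    subst this
    exact .cons a σ' τ' [] hreg hc hne (.single τ' (Regular.mem_cplx hreg).2)
  | cons a b c rest hreg₁ hc₁ hne₁ hrest ih =>
    intro hlast
    have hlast' : (c :: rest).getLast? = some τ'' := by
      rw [← hlast]; simp [List.getLast?_cons_cons]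
    exact .cons a b c _ hreg₁ hc₁ hne₁ (ih hlast')
lemma refFwd (W : MorseSeq V) {Λ : Finset V → Finset (Finset V)} (hΛ : IsRefMap W Λ)
    (κ : Finset V) :
    ∀ i, i ≤ W.k → ∀ ν ∈ W.seq i, κ ∈ Λ ν →
      ∃ l, IsRefPath W Λ l ∧ l.head? = some ν ∧ l.getLast? = some κ := by
  intro i
  induction i using Nat.strong_induction_on with
  | _ i IH =>
  intro hik ν hν hκν
  have h1 : 1 ≤ i := by
    rcases Nat.eq_zero_or_pos i with h | h
    · exfalso; rw [h, W.init] at hν; exact absurd hν (Finset.notMem_empty ν)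
    · exact h
  by_cases hprev : ν ∈ W.seq (i-1)
  · exact IH (i-1) (by omega) (by omega) ν hprev hκν
  rcases step_cases W h1 hik hν hprev with ⟨hcrit, _⟩ | ⟨σ, τ, hreg, hfp, hE, hcase⟩
  · -- critical: κ = ν, single path
    have hΛν : Λ ν = {ν} := hΛ.2.1 ν hcrit
    rw [hΛν, Finset.mem_singleton] at hκν
    subst hκν
    refine ⟨[κ], ⟨.single κ (seq_mono W hik le_rfl hν), ?_⟩, rfl, rfl⟩
    intro κ' hκ' j hj σ hσ
    simp at hκ'
    subst hκ'
    match j, hσ with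
    | 0, hσ =>
      simp at hσ
      subst hσ
      rw [hΛν]; exact Finset.mem_singleton_self κ
    | (m+1), hσ => simp at hσ
  rcases hcase with rfl | rfl
  · -- ν lower regular, pair (ν, τ)
    have hup := hΛ.2.2 τ ⟨ν, hreg⟩
    have hcodim : ν.card + 1 = τ.card := freePair_card (W.cpx i hik) hfp
    have hνbd : ν ∈ bd τ := by
      simp only [bd, Finset.mem_filter, Finset.mem_powerset]
      exact ⟨hreg.choose_spec.2.2.1.1, (W.cpx i hik ν hν).1, hcodim⟩
    obtain ⟨σ', hσ'bd, hσ'ne, hκσ'⟩ := chainSum_even hup.2 hνbd hκν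
    simp only [bd, Finset.mem_filter, Finset.mem_powerset] at hσ'bd
    obtain ⟨hσ'τ, hσ'ne', hσ'card⟩ := hσ'bd
    have hσ'K : σ' ∈ W.seq i := (W.cpx i hik τ hfp.2.1).2 σ' hσ'τ hσ'ne'
    have hσ'prev : σ' ∈ W.seq (i-1) := by
      rw [hE, Finset.mem_sdiff]
      refine ⟨hσ'K, ?_⟩
      simp only [Finset.mem_insert, Finset.mem_singleton]
      push_neg
      exact ⟨hσ'ne, fun h => by rw [h] at hσ'card; omega⟩
    obtain ⟨l, ⟨hgrad, hprop⟩, hhead, hlast⟩ :=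
      IH (i-1) (by omega) (by omega) σ' hσ'prev hκσ'
    obtain ⟨rest, rfl⟩ : ∃ rest, l = σ' :: rest := by
      cases l with
      | nil => simp at hhead
      | cons a rest =>
        have ha : a = σ' := by simpa using hhead
        subst ha
        exact ⟨rest, rfl⟩
    refine ⟨ν :: τ :: σ' :: rest, ⟨?_, ?_⟩, rfl, ?_⟩
    · exact .cons ν τ σ' rest hreg (by
        simp only [bd, Finset.mem_filter, Finset.mem_powerset]
        exact ⟨hσ'τ, hσ'ne', hσ'card⟩) hσ'ne hgrad
    · intro κ' hκ' j hj σ'' hσ''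
      have hlast2 : (ν :: τ :: σ' :: rest).getLast? = some κ := by
        rw [List.getLast?_cons_cons, List.getLast?_cons_cons] at *
        · exact hlast
      rw [hlast2] at hκ'
      simp at hκ'
      subst hκ'
      match j, hj, hσ'' with
      | 0, _, hσ'' => simp at hσ''; subst hσ''; exact hκν
      | (m+2), hj, hσ'' =>
        have : (σ' :: rest)[m]? = some σ'' := by simpa using hσ''
        exact hprop κ (by rw [hlast]; rfl) m (by omega) σ'' this
    · rw [List.getLast?_cons_cons, List.getLast?_cons_cons]
      exact hlast
  · -- ν upper regular: contradiction
    have := (hΛ.2.2 ν ⟨σ, hreg⟩).1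
    rw [this] at hκν
    exact absurd hκν (Finset.notMem_empty κ)
lemma corefFwd (W : MorseSeq V) {Vee : Finset V → Finset (Finset V)} (hV : IsCorefMap W Vee)
    (κ : Finset V) :
    ∀ d i, W.k - i ≤ d → 1 ≤ i → i ≤ W.k → ∀ ν, ν ∈ W.seq i → ν ∉ W.seq (i-1) → κ ∈ Vee ν →
      ∃ l, IsCorefPath W Vee l ∧ l.head? = some κ ∧ l.getLast? = some ν := by
  intro d
  induction d using Nat.strong_induction_on with
  | _ d IH =>
  intro i hd h1 hik ν hν hprev hκν
  rcases step_cases W h1 hik hν hprev with ⟨hcrit, _⟩ | ⟨σ, τ, hreg, hfp, hE, hcase⟩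
  · -- critical: κ = ν, single path
    have hVν : Vee ν = {ν} := hV.2.1 ν hcrit
    rw [hVν, Finset.mem_singleton] at hκν
    subst hκν
    refine ⟨[κ], ⟨.single κ (seq_mono W hik le_rfl hν), ?_⟩, rfl, rfl⟩
    intro κ' hκ' j hj τ hτ
    simp at hκ'
    subst hκ'
    match j, hτ with
    | 0, hτ =>
      simp at hτ
      subst hτ
      rw [hVν]; exact Finset.mem_singleton_self κ
    | (m+1), hτ => simp at hτ
  rcases hcase with rfl | rfl
  · -- ν lower regular: contradiction
    have := (hV.2.2 ν ⟨τ, hreg⟩).1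
    rw [this] at hκν
    exact absurd hκν (Finset.notMem_empty κ)
  · -- ν upper regular, pair (σ, ν)
    have hlow := hV.2.2 σ ⟨ν, hreg⟩
    have hcodim : σ.card + 1 = ν.card := freePair_card (W.cpx i hik) hfp
    have hνcobd : ν ∈ cobd W.cplx σ := by
      simp only [cobd, Finset.mem_filter]
      exact ⟨seq_mono W hik le_rfl hν, hfp.2.2.1.subset, hcodim⟩
    obtain ⟨τ'', hτ''cobd, hτ''ne, hκτ''⟩ := chainSum_even hlow.2 hνcobd hκν
    have hτ''m := hτ''cobd
    simp only [cobd, Finset.mem_filter] at hτ''m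
    obtain ⟨hτ''cplx, hστ'', hτ''card⟩ := hτ''m
    have hτ''notin : τ'' ∉ W.seq i := by
      intro hin
      have hss : σ ⊂ τ'' := by
        refine Finset.ssubset_iff_subset_ne.mpr ⟨hστ'', ?_⟩
        intro h; rw [← h] at hτ''card; omega
      exact hτ''ne (hfp.2.2.2 τ'' hin hss)
    obtain ⟨j, hj1, hjk, hjmem, hjmin⟩ := exists_addIdx W hτ''cplx
    have hij : i < j := by
      by_contra hcon
      push_neg at hcon
      exact hτ''notin (seq_mono W hcon hik hjmem)
    have hjprev : τ'' ∉ W.seq (j-1) := hjmin (j-1) (by omega)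
    obtain ⟨l, ⟨hcograd, hprop⟩, hhead, hlast⟩ :=
      IH (W.k - j) (by omega) j (le_rfl) hj1 hjk τ'' hjmem hjprev hκτ''
    refine ⟨l ++ [σ, ν], ⟨cograd_append hcograd hlast hreg hτ''cobd (fun h => hτ''ne h.symm), ?_⟩,
      ?_, ?_⟩
    · intro κ' hκ' m hm τ hτ
      have hlnil : l ≠ [] := by intro h; rw [h] at hhead; simp at hhead
      have hhead2 : (l ++ [σ, ν]).head? = some κ := by
        rw [List.head?_append_of_ne_nil _ hlnil]; exact hhead
      rw [hhead2] at hκ'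
      simp at hκ'
      subst hκ'
      have hlen : l.length % 2 = 1 := cogradLen hcograd
      rcases Nat.lt_or_ge m l.length with hml | hml
      · have : (l ++ [σ, ν])[m]? = l[m]? := by rw [List.getElem?_append]; simp [hml]
        rw [this] at hτ
        exact hprop κ (by rw [hhead]; rfl) m hm τ hτ
      · have : (l ++ [σ, ν])[m]? = [σ, ν][m - l.length]? := List.getElem?_append_right hml
        rw [this] at hτ
        have hm1 : m ≠ l.length := by omega
        have : m - l.length = 1 := by
          rcases Nat.lt_or_ge m (l.length + 2) with h | h
          · omega
          · exfalso
            have : [σ, ν][m - l.length]? = none := by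
              apply List.getElem?_eq_none
              simp; omega
            rw [this] at hτ; simp at hτ
        rw [this] at hτ
        simp at hτ
        subst hτ
        exact hκν
    · have hlnil : l ≠ [] := by intro h; rw [h] at hhead; simp at hhead
      rw [List.head?_append_of_ne_nil _ hlnil]; exact hhead
    · have : l ++ [σ, ν] = (l ++ [σ]) ++ [ν] := by simp
      rw [this, List.getLast?_concat]

/-- `κ ∈ ∧(ν)` iff there exists a `∧`-path from `ν` to `κ`, and
`κ ∈ ∨(ν)` iff there exists a `∨`-path from `κ` to `ν`. -/
theorem reference_iff_exists_refPath (W : MorseSeq V)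
    (Λ Vee : Finset V → Finset (Finset V))
    (hΛ : IsRefMap W Λ) (hV : IsCorefMap W Vee)
    (κ ν : Finset V) (hκ : W.Critical κ) (hν : ν ∈ W.cplx) :
    (κ ∈ Λ ν ↔ ∃ l, IsRefPath W Λ l ∧ l.head? = some ν ∧ l.getLast? = some κ) ∧
    (κ ∈ Vee ν ↔ ∃ l, IsCorefPath W Vee l ∧ l.head? = some κ ∧ l.getLast? = some ν) := by
  constructor
  · constructor
    · intro hmem
      exact refFwd W hΛ κ W.k le_rfl ν hν hmem
    · rintro ⟨l, ⟨hgrad, hprop⟩, hhead, hlast⟩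
      have h0 : l[0]? = some ν := by rw [← List.head?_eq_getElem?] at *; exact hhead
      exact hprop κ (by rw [hlast]; rfl) 0 rfl ν (by rw [h0]; rfl)
  · constructor
    · intro hmem
      obtain ⟨i, h1, h2, hmemi, hmin⟩ := exists_addIdx W hν
      exact corefFwd W hV κ (W.k - i) i le_rfl h1 h2 ν hmemi (hmin (i-1) (by omega)) hmem
    · rintro ⟨l, ⟨hcograd, hprop⟩, hhead, hlast⟩
      have hlen : l.length % 2 = 1 := cogradLen hcograd
      have hlast2 : l[l.length - 1]? = some ν := by
        rw [← List.getLast?_eq_getElem?]; exact hlast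
      exact hprop κ (by rw [hhead]; rfl) (l.length - 1) (by omega) ν (by rw [hlast2]; rfl)
end

section
/- Let W be a Morse sequence on K with reference pair (∧,∨). Then for every p, ∂̂_p ∘ ∧_p = ∧_{p−1} ∘ ∂_p and δ̂_p ∘ ∨_p = ∨_{p+1} ∘ δ_p as linear maps on p-chains; that is, ∧ is a chain map from (K[p], ∂_p) to (Ŵ[p], ∂̂_p) and ∨ is a cochain map from (K[p], δ_p) to (Ŵ[p], δ̂_p). -/
/-! ## Basic notions: simplicial complexes, collapses, expansions, fillings -/

variable {V : Type*} [DecidableEq V]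

/-! By linearity it suffices to check `∂̂ (∧ σ) = ∧ (∂ σ)` for each simplex `σ` of `K`, by induction
along the Morse sequence. A critical `σ` is fixed by `∧`, and an upper regular `τ` has
`∧ τ = 0 = ∧ (∂ τ)`. For a lower regular `σ` paired with `τ`, the relation `∧ (∂ τ) = 0` writes
`∧ σ` as the sum of `∧ ρ` over the other faces `ρ` of `∂ τ`, all of which appear earlier in the
sequence; the identity at those faces together with `∂ ∂ τ = 0` gives it at `σ`. The cochain case
is dual: `δ` replaces `∂`, lower and upper regular faces exchange roles, and the induction runs
backwards, since the other cofaces of a lower regular `σ` appear after its partner. -/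

theorem ZMod.eq_zero_or_eq_one (x : ZMod 2) : x = 0 ∨ x = 1 := by
  revert x; decide

theorem ZMod.ite_eq_one_eq_mul (x a : ZMod 2) : (if x = 1 then a else 0) = x * a := by
  rcases x.eq_zero_or_eq_one with rfl | rfl <;> simp

theorem ZMod.ne_one_iff (x : ZMod 2) : x ≠ 1 ↔ x = 0 := by
  rcases x.eq_zero_or_eq_one with rfl | rfl <;> simp

theorem card_filter_mod_two_eq_one_iff {α : Type*} {s : Finset α} {p : α → Prop}
    [DecidablePred p] :
    (s.filter p).card % 2 = 1 ↔ ∑ σ ∈ s, (if p σ then 1 else 0 : ZMod 2) = 1 := by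
  rw [Finset.sum_boole, ZMod.natCast_eq_one_iff_odd, Nat.odd_iff]

section ChainSum

variable {c : Finset (Finset V)} {f g : Finset V → Finset (Finset V)} {μ σ : Finset V}

theorem mem_chainSum :
    μ ∈ chainSum c f ↔ ∑ σ ∈ c, (if μ ∈ f σ then 1 else 0 : ZMod 2) = 1 := by
  rw [← card_filter_mod_two_eq_one_iff, chainSum, Finset.mem_filter, and_iff_right_iff_imp]
  intro hodd
  obtain ⟨σ, hσ⟩ := Finset.card_pos.mp (show 0 < (c.filter fun σ => μ ∈ f σ).card by omega)
  exact Finset.mem_biUnion.mpr ⟨σ, (Finset.mem_filter.mp hσ).1, (Finset.mem_filter.mp hσ).2⟩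

theorem sum_chainSum (h : Finset V → ZMod 2) :
    ∑ ν ∈ chainSum c g, h ν = ∑ σ ∈ c, ∑ ν ∈ g σ, h ν := by
  calc ∑ ν ∈ chainSum c g, h ν
      = ∑ ν ∈ c.biUnion g, (∑ σ ∈ c, if ν ∈ g σ then 1 else 0) * h ν := by
        simp only [chainSum, Finset.sum_filter, card_filter_mod_two_eq_one_iff,
          ZMod.ite_eq_one_eq_mul]
      _ = ∑ σ ∈ c, ∑ ν ∈ g σ, h ν := by
        simp_rw [Finset.sum_mul, ite_mul, one_mul, zero_mul]
        rw [Finset.sum_comm]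
        refine Finset.sum_congr rfl fun σ hσ => ?_
        rw [Finset.sum_ite_mem, Finset.inter_eq_right.mpr (Finset.subset_biUnion_of_mem g hσ)]

theorem chainSum_chainSum (c : Finset (Finset V)) (g f : Finset V → Finset (Finset V)) :
    chainSum (chainSum c g) f = chainSum c fun σ => chainSum (g σ) f := by
  ext μ
  simp only [mem_chainSum, sum_chainSum, ZMod.ite_eq_one_eq_mul, mul_one]

theorem chainSum_congr (h : ∀ σ ∈ c, f σ = g σ) : chainSum c f = chainSum c g := by
  ext μ
  simp only [mem_chainSum]
  rw [Finset.sum_congr rfl fun σ hσ => by rw [h σ hσ]]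

@[simp]
theorem chainSum_empty (f : Finset V → Finset (Finset V)) : chainSum ∅ f = ∅ := by
  simp [chainSum]

@[simp]
theorem chainSum_singleton (σ : Finset V) (f : Finset V → Finset (Finset V)) :
    chainSum {σ} f = f σ := by
  ext μ
  rw [mem_chainSum, Finset.sum_singleton]
  split_ifs with hμ <;> simp [hμ]

theorem chainSum_eq_empty_iff :
    chainSum c f = ∅ ↔ ∀ μ, ∑ σ ∈ c, (if μ ∈ f σ then 1 else 0 : ZMod 2) = 0 := by
  simp only [Finset.eq_empty_iff_forall_notMem, mem_chainSum, ZMod.ne_one_iff]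

theorem eq_chainSum_erase_of_chainSum_eq_empty (hσ : σ ∈ c) (h : chainSum c f = ∅) :
    f σ = chainSum (c.erase σ) f := by
  ext μ
  have hμ := chainSum_eq_empty_iff.mp h μ
  rw [← Finset.add_sum_erase _ _ hσ] at hμ
  rw [mem_chainSum]
  generalize (∑ x ∈ c.erase σ, if μ ∈ f x then 1 else 0 : ZMod 2) = s at hμ ⊢
  by_cases hm : μ ∈ f σ <;> simp only [hm, if_true, if_false, true_iff, false_iff] at hμ ⊢ <;>
    revert s <;> decide

theorem chainSum_eq_empty_of_even_card (h : ∀ μ, Even (c.filter fun σ => μ ∈ f σ).card) :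
    chainSum c f = ∅ :=
  chainSum_eq_empty_iff.mpr fun μ => by
    rw [Finset.sum_boole, ZMod.natCast_eq_zero_iff_even]
    exact h μ

end ChainSum

section Boundary

theorem mem_bd {α : Type*} {ρ τ : Finset α} :
    ρ ∈ bd τ ↔ ρ ⊆ τ ∧ ρ.Nonempty ∧ ρ.card + 1 = τ.card := by
  simp [bd]

theorem mem_cobd {K : Finset (Finset V)} {σ ρ : Finset V} :
    ρ ∈ cobd K σ ↔ ρ ∈ K ∧ σ ⊆ ρ ∧ σ.card + 1 = ρ.card := by
  simp [cobd]

theorem card_eq_two_of_mem_iff {σ μ : Finset V} (hσμ : σ ⊆ μ) (hcard : σ.card + 2 = μ.card)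
    {S : Finset (Finset V)} (hS : ∀ ρ, ρ ∈ S ↔ σ ⊆ ρ ∧ ρ ⊆ μ ∧ σ.card + 1 = ρ.card) :
    S.card = 2 := by
  have himage : S = (μ \ σ).image (insert · σ) := by
    ext ρ
    rw [hS, Finset.mem_image]
    constructor
    · rintro ⟨hσρ, hρμ, hρcard⟩
      obtain ⟨x, hx⟩ := Finset.card_eq_one.mp
        (show (ρ \ σ).card = 1 by rw [Finset.card_sdiff_of_subset hσρ]; omega)
      have hxρ : x ∈ ρ \ σ := hx ▸ Finset.mem_singleton_self x
      rw [Finset.mem_sdiff] at hxρ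
      refine ⟨x, Finset.mem_sdiff.mpr ⟨hρμ hxρ.1, hxρ.2⟩, ?_⟩
      refine Finset.eq_of_subset_of_card_le (Finset.insert_subset hxρ.1 hσρ) ?_
      rw [Finset.card_insert_of_notMem hxρ.2]
      omega
    · rintro ⟨x, hx, rfl⟩
      rw [Finset.mem_sdiff] at hx
      exact ⟨Finset.subset_insert _ _, Finset.insert_subset hx.1 hσμ,
        (Finset.card_insert_of_notMem hx.2).symm⟩
  have hinj : Set.InjOn (insert · σ) (μ \ σ : Finset V) := by
    intro x hx y _ hxy
    exact (Finset.insert_inj (Finset.mem_sdiff.mp hx).2).mp hxy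
  rw [himage, Finset.card_image_of_injOn hinj, Finset.card_sdiff_of_subset hσμ]
  omega

theorem chainSum_bd_bd (τ : Finset V) : chainSum (bd τ) bd = ∅ := by
  refine chainSum_eq_empty_of_even_card fun μ => ?_
  by_cases hμ : μ ⊆ τ ∧ μ.Nonempty ∧ μ.card + 2 = τ.card
  · rw [card_eq_two_of_mem_iff hμ.1 hμ.2.2 fun ρ => ?_]
    · exact even_two
    simp only [Finset.mem_filter, mem_bd]
    constructor
    · rintro ⟨⟨hρτ, -, hρcard⟩, hμρ, -, hμcard⟩
      exact ⟨hμρ, hρτ, hμcard⟩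
    · rintro ⟨hμρ, hρτ, hμcard⟩
      exact ⟨⟨hρτ, hμ.2.1.mono hμρ, by omega⟩, hμρ, hμ.2.1, hμcard⟩
  · rw [Finset.filter_false_of_mem]
    · exact Even.zero
    rintro ρ hρ hμρ
    obtain ⟨hμρ, hμne, hμcard⟩ := mem_bd.mp hμρ
    obtain ⟨hρτ, -, hρcard⟩ := mem_bd.mp hρ
    exact hμ ⟨hμρ.trans hρτ, hμne, by omega⟩

theorem chainSum_cobd_cobd {K : Finset (Finset V)} (hK : IsComplex K) (σ : Finset V) :
    chainSum (cobd K σ) (cobd K) = ∅ := by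
  refine chainSum_eq_empty_of_even_card fun μ => ?_
  by_cases hμ : μ ∈ K ∧ σ ⊆ μ ∧ σ.card + 2 = μ.card
  · rw [card_eq_two_of_mem_iff hμ.2.1 hμ.2.2 fun ρ => ?_]
    · exact even_two
    simp only [Finset.mem_filter, mem_cobd]
    constructor
    · rintro ⟨⟨-, hσρ, hρcard⟩, -, hρμ, -⟩
      exact ⟨hσρ, hρμ, hρcard⟩
    · rintro ⟨hσρ, hρμ, hρcard⟩
      have hρK : ρ ∈ K := (hK μ hμ.1).2 ρ hρμ (Finset.card_pos.mp (by omega))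
      exact ⟨⟨hρK, hσρ, hρcard⟩, hμ.1, hρμ, by omega⟩
  · rw [Finset.filter_false_of_mem]
    · exact Even.zero
    rintro ρ hρ hμρ
    obtain ⟨hμK, hρμ, hμcard⟩ := mem_cobd.mp hμρ
    obtain ⟨-, hσρ, hρcard⟩ := mem_cobd.mp hρ
    exact hμ ⟨hμK, hσρ.trans hρμ, by omega⟩

end Boundary

section ChainMap

variable {Λ D : Finset V → Finset (Finset V)} {σ τ : Finset V}

def IsChainMapAt (Λ D : Finset V → Finset (Finset V)) (σ : Finset V) : Prop :=
  chainSum (Λ σ) (fun ν => chainSum (D ν) Λ) = chainSum (D σ) Λ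

theorem IsChainMapAt.of_eq_singleton (h : Λ σ = {σ}) : IsChainMapAt Λ D σ := by
  rw [IsChainMapAt, h, chainSum_singleton]

theorem IsChainMapAt.of_eq_empty (hσ : Λ σ = ∅) (hDσ : chainSum (D σ) Λ = ∅) :
    IsChainMapAt Λ D σ := by
  rw [IsChainMapAt, hσ, hDσ, chainSum_empty]

theorem IsChainMapAt.of_mem (hσ : σ ∈ D τ) (hDD : chainSum (D τ) D = ∅)
    (hΛ : chainSum (D τ) Λ = ∅) (h : ∀ ρ ∈ (D τ).erase σ, IsChainMapAt Λ D ρ) :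
    IsChainMapAt Λ D σ := by
  have hDΛ : chainSum (D τ) (fun ρ => chainSum (D ρ) Λ) = ∅ := by
    rw [← chainSum_chainSum, hDD, chainSum_empty]
  calc chainSum (Λ σ) (fun ν => chainSum (D ν) Λ)
      = chainSum (chainSum ((D τ).erase σ) Λ) (fun ν => chainSum (D ν) Λ) := by
        rw [← eq_chainSum_erase_of_chainSum_eq_empty hσ hΛ]
    _ = chainSum ((D τ).erase σ) (fun ρ => chainSum (Λ ρ) (fun ν => chainSum (D ν) Λ)) :=
        chainSum_chainSum _ _ _
    _ = chainSum ((D τ).erase σ) (fun ρ => chainSum (D ρ) Λ) := chainSum_congr h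
    _ = chainSum (D σ) Λ := (eq_chainSum_erase_of_chainSum_eq_empty hσ hDΛ).symm

theorem chainSum_chainSum_eq_of_isChainMapAt {c : Finset (Finset V)}
    (h : ∀ σ ∈ c, IsChainMapAt Λ D σ) :
    chainSum (chainSum c Λ) (fun ν => chainSum (D ν) Λ) = chainSum (chainSum c D) Λ := by
  rw [chainSum_chainSum, chainSum_chainSum]
  exact chainSum_congr h

end ChainMap

section FreePair

variable {K L : Finset (Finset V)} {σ τ ρ : Finset V}

theorem IsFreePair.card_add_one (hK : IsComplex K) (h : IsFreePair K σ τ) :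
    σ.card + 1 = τ.card := by
  obtain ⟨-, hτ, hστ, huniq⟩ := h
  obtain ⟨x, hxτ, hxσ⟩ := Finset.exists_of_ssubset hστ
  have hxσK : insert x σ ∈ K :=
    (hK τ hτ).2 _ (Finset.insert_subset hxτ hστ.subset) (Finset.insert_nonempty x σ)
  rw [← huniq _ hxσK (Finset.ssubset_insert hxσ), Finset.card_insert_of_notMem hxσ]

theorem IsFreePair.lower_mem_bd_upper (hK : IsComplex K) (h : IsFreePair K σ τ) : σ ∈ bd τ :=
  mem_bd.mpr ⟨h.2.2.1.subset, (hK σ h.1).1, h.card_add_one hK⟩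

theorem IsFreePair.upper_mem_cobd_lower (hK : IsComplex K) (h : IsFreePair K σ τ) (hτL : τ ∈ L) :
    τ ∈ cobd L σ :=
  mem_cobd.mpr ⟨hτL, h.2.2.1.subset, h.card_add_one hK⟩

theorem IsFreePair.mem_sdiff_of_mem_erase_bd (hK : IsComplex K) (h : IsFreePair K σ τ)
    (hρ : ρ ∈ (bd τ).erase σ) : ρ ∈ K \ {σ, τ} := by
  obtain ⟨hρσ, hρτ⟩ := Finset.mem_erase.mp hρ
  obtain ⟨hρτ, hρne, hρcard⟩ := mem_bd.mp hρτ
  have hρ_ne_τ : ρ ≠ τ := by rintro rfl; omega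
  simp only [Finset.mem_sdiff, Finset.mem_insert, Finset.mem_singleton]
  exact ⟨(hK τ h.2.1).2 ρ hρτ hρne, by tauto⟩

theorem IsFreePair.notMem_of_mem_erase_cobd (h : IsFreePair K σ τ)
    (hρ : ρ ∈ (cobd L σ).erase τ) : ρ ∉ K := by
  obtain ⟨hρτ, hρσ⟩ := Finset.mem_erase.mp hρ
  obtain ⟨-, hσρ, hcard⟩ := mem_cobd.mp hρσ
  have hσρ' : σ ⊂ ρ := hσρ.ssubset_of_ne (by rintro rfl; omega)
  exact fun hρK => hρτ (h.2.2.2 ρ hρK hσρ')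

end FreePair

namespace MorseSeq

variable (W : MorseSeq V) {i : ℕ} {σ : Finset V}

theorem isComplex_cplx : IsComplex W.cplx := W.cpx W.k le_rfl

theorem critical_or_regular_of_mem_sdiff (h1 : 1 ≤ i) (hi : i ≤ W.k)
    (hσ : σ ∈ W.seq i \ W.seq (i - 1)) :
    W.Critical σ ∨ ∃ σ₀ τ, IsFreePair (W.seq i) σ₀ τ ∧ W.seq (i - 1) = W.seq i \ {σ₀, τ} ∧
      W.Regular σ₀ τ ∧ (σ = σ₀ ∨ σ = τ) := by
  rcases W.step i h1 hi with ⟨σ₀, τ, hfree, heq⟩ | ⟨ν, hν, heq⟩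
  · have hnew : W.seq i \ W.seq (i - 1) = {σ₀, τ} := by
      rw [heq, Finset.sdiff_sdiff_eq_self]
      exact Finset.insert_subset hfree.1 (Finset.singleton_subset_iff.mpr hfree.2.1)
    refine Or.inr ⟨σ₀, τ, hfree, heq, ⟨i, h1, hi, hfree.2.2.1, hnew⟩, ?_⟩
    simpa [hnew] using hσ
  · have hnew : W.seq i \ W.seq (i - 1) = {ν} := by
      rw [heq, Finset.sdiff_sdiff_eq_self (Finset.singleton_subset_iff.mpr hν.1)]
    rw [hnew, Finset.mem_singleton] at hσ
    exact Or.inl ⟨i, h1, hi, hσ ▸ hnew⟩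

end MorseSeq

section Pointwise

variable {W : MorseSeq V} {Λ : Finset V → Finset (Finset V)}

theorem IsRefMap.isChainMapAt (hΛ : IsRefMap W Λ) {σ : Finset V} (hσ : σ ∈ W.cplx) :
    IsChainMapAt Λ bd σ := by
  suffices h : ∀ i ≤ W.k, ∀ σ ∈ W.seq i, IsChainMapAt Λ bd σ from h W.k le_rfl σ hσ
  intro i
  induction i with
  | zero => simp [W.init]
  | succ i ih =>
    intro hi σ hσ
    by_cases hold : σ ∈ W.seq i
    · exact ih (by omega) σ hold
    have hnew : σ ∈ W.seq (i + 1) \ W.seq (i + 1 - 1) := Finset.mem_sdiff.mpr ⟨hσ, hold⟩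
    rcases W.critical_or_regular_of_mem_sdiff (by omega) hi hnew with
      hcrit | ⟨σ₀, τ, hfree, heq, hreg, rfl | rfl⟩
    · exact .of_eq_singleton (hΛ.2.1 σ hcrit)
    · have hK := W.cpx (i + 1) hi
      refine .of_mem (hfree.lower_mem_bd_upper hK) (chainSum_bd_bd τ) (hΛ.2.2 τ ⟨σ, hreg⟩).2
        fun ρ hρ => ih (by omega) ρ ?_
      rw [← Nat.add_sub_cancel i 1, heq]
      exact hfree.mem_sdiff_of_mem_erase_bd hK hρ
    · exact (hΛ.2.2 σ ⟨σ₀, hreg⟩).elim .of_eq_empty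

theorem IsCorefMap.isChainMapAt (hΛ : IsCorefMap W Λ) {σ : Finset V} (hσ : σ ∈ W.cplx) :
    IsChainMapAt Λ (cobd W.cplx) σ := by
  suffices h : ∀ i ≤ W.k, ∀ σ ∈ W.cplx, σ ∉ W.seq i → IsChainMapAt Λ (cobd W.cplx) σ from
    h 0 (Nat.zero_le _) σ hσ (by simp [W.init])
  intro i hi
  induction hi using Nat.decreasingInduction with
  | self => exact fun σ hσ hσ' => absurd hσ hσ'
  | of_succ i hi ih =>
    intro σ hσ hold
    by_cases hσ' : σ ∈ W.seq (i + 1)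
    case neg => exact ih σ hσ hσ'
    have hnew : σ ∈ W.seq (i + 1) \ W.seq (i + 1 - 1) := Finset.mem_sdiff.mpr ⟨hσ', hold⟩
    rcases W.critical_or_regular_of_mem_sdiff (by omega) hi hnew with
      hcrit | ⟨σ₀, τ, hfree, heq, hreg, rfl | rfl⟩
    · exact .of_eq_singleton (hΛ.2.1 σ hcrit)
    · exact (hΛ.2.2 σ ⟨τ, hreg⟩).elim .of_eq_empty
    · refine .of_mem (hfree.upper_mem_cobd_lower (W.cpx (i + 1) hi) hσ)
        (chainSum_cobd_cobd W.isComplex_cplx σ₀) (hΛ.2.2 σ₀ ⟨σ, hreg⟩).2 fun ρ hρ => ?_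
      exact ih ρ (mem_cobd.mp (Finset.mem_of_mem_erase hρ)).1
        (hfree.notMem_of_mem_erase_cobd hρ)

end Pointwise

/-- `∂̂_p ∘ ∧_p = ∧_{p-1} ∘ ∂_p` and `δ̂_p ∘ ∨_p = ∨_{p+1} ∘ δ_p` :
the reference map is a chain map and the coreference map is a cochain map. -/
theorem reference_chain_map_coreference_cochain_map (W : MorseSeq V)
    (Λ Vee : Finset V → Finset (Finset V))
    (hΛ : IsRefMap W Λ) (hV : IsCorefMap W Vee)
    (p : ℕ) (c : Finset (Finset V)) (hc : IsChainOf W.cplx p c) :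
    chainSum (chainSum c Λ) (fun ν => chainSum (bd ν) Λ) = chainSum (chainSum c bd) Λ ∧
    chainSum (chainSum c Vee) (fun ν => chainSum (cobd W.cplx ν) Vee) =
      chainSum (chainSum c (cobd W.cplx)) Vee :=
  ⟨chainSum_chainSum_eq_of_isChainMapAt fun σ hσ => hΛ.isChainMapAt (hc σ hσ).1,
    chainSum_chainSum_eq_of_isChainMapAt fun σ hσ => hV.isChainMapAt (hc σ hσ).1⟩
end
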